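/- Let g : (0,∞) → ℝ be convex, non-increasing, C¹, with γ·g'(r)² ≤ g''(r) for a.e. r ∈ (0,∞) for some γ ∈ (0,1]. Then for all x, y > 0 and all a, b > 0: -(b²g'(y) - a²g'(x))(y - x) ≤ -(γ/2)·min(a²,b²)·(g(y) - g(x))² + (2/γ)·max(a²/b², b²/a²)·(b - a)². -/

import Mathlib

open MeasureTheory Set

/-!
Write `Δ = g y - g x`. Since `g'` is continuous and monotone (by convexity), Cauchy–Schwarz for
`Δ = ∫ₓʸ g'` and the fact that a monotone function increases by at least the integral of its
a.e. derivative give `γ Δ² ≤ γ (y - x) ∫ₓʸ g'² ≤ (y - x) ∫ₓʸ g'' ≤ (g' y - g' x)(y - x)`.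
For `a ≤ b` split `b² g' y - a² g' x = a² (g' y - g' x) + (b² - a²) g' y`: the first part
contributes `-γ a² Δ²`, and the tangent line of `g` at `y` bounds `-g' y (y - x)` by `|Δ|`, whose
coefficient `b² - a² ≤ 2b (b - a)` is absorbed by half of `γ a² Δ²` through `2uv ≤ u² + v²`.
-/

theorem sq_intervalIntegral_le_mul_intervalIntegral_sq {f : ℝ → ℝ} {a b : ℝ} (hab : a ≤ b)
    (hf : ContinuousOn f (Icc a b)) :
    (∫ t in a..b, f t) ^ 2 ≤ (b - a) * ∫ t in a..b, f t ^ 2 := by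
  rcases hab.eq_or_lt with rfl | hlt
  · simp
  have jensen := (even_two.convexOn_pow (𝕜 := ℝ)).map_set_average_le (μ := volume)
    (t := Ioc a b) (f := f) (continuous_pow 2).continuousOn isClosed_univ
    (by simp [hlt]) (by simp) (by simp)
    (hf.integrableOn_Icc.mono_set Ioc_subset_Icc_self)
    ((hf.pow 2).integrableOn_Icc.mono_set Ioc_subset_Icc_self)
  simp only [setAverage_eq, Real.volume_real_Ioc_of_le hab, smul_eq_mul] at jensen
  rw [intervalIntegral.integral_of_le hab, intervalIntegral.integral_of_le hab]
  have hL : (b - a) ^ 2 * (b - a)⁻¹ = b - a := by field_simp [(sub_pos.2 hlt).ne']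
  calc _ = (b - a) ^ 2 * ((b - a)⁻¹ * ∫ t in Ioc a b, f t) ^ 2 := by
        field_simp [(sub_pos.2 hlt).ne']
    _ ≤ (b - a) ^ 2 * ((b - a)⁻¹ * ∫ t in Ioc a b, f t ^ 2) := by gcongr
    _ = _ := by rw [← mul_assoc, hL]

theorem MonotoneOn.intervalIntegral_le_sub_of_ae_le_deriv {f φ : ℝ → ℝ} {a b : ℝ} (hab : a ≤ b)
    (hf : MonotoneOn f (Icc a b)) (hφ : IntervalIntegrable φ volume a b)
    (hφf : ∀ᵐ t, t ∈ Ioo a b → φ t ≤ deriv f t) :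
    ∫ t in a..b, φ t ≤ f b - f a := by
  rw [← uIcc_of_le hab] at hf
  have hderiv_le : ∫ t in a..b, deriv f t ≤ f b - f a := by
    have := hf.intervalIntegral_deriv_mem_uIcc
    rw [uIcc_of_le (sub_nonneg.2 (hf (by simp) (by simp) hab))] at this
    exact this.2
  refine (intervalIntegral.integral_mono_ae_restrict hab hφ hf.intervalIntegrable_deriv ?_).trans
    hderiv_le
  rwa [Filter.EventuallyLE, Measure.restrict_congr_set Ioo_ae_eq_Icc.symm,
    ae_restrict_iff' measurableSet_Ioo]

theorem mul_sq_sub_le_of_ae_mul_sq_le_deriv2 {S : Set ℝ} [S.OrdConnected] {g g' g'' : ℝ → ℝ}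
    {γ x y : ℝ} (hγ : 0 ≤ γ) (hmono : MonotoneOn g' S) (hderiv : ∀ r ∈ S, HasDerivAt g (g' r) r)
    (hcont : ContinuousOn g' S) (hderiv2 : ∀ᵐ r, r ∈ S → HasDerivAt g' (g'' r) r)
    (hineq : ∀ᵐ r, r ∈ S → γ * g' r ^ 2 ≤ g'' r) (hx : x ∈ S) (hy : y ∈ S) :
    γ * (g y - g x) ^ 2 ≤ (g' y - g' x) * (y - x) := by
  wlog hxy : x ≤ y generalizing x y
  · linarith [this hy hx (le_of_not_ge hxy), show (g x - g y) ^ 2 = (g y - g x) ^ 2 by ring,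
      show (g' x - g' y) * (x - y) = (g' y - g' x) * (y - x) by ring]
  have hsub : Icc x y ⊆ S := Set.Icc_subset S hx hy
  have hcont' := hcont.mono hsub
  have hftc : ∫ t in x..y, g' t = g y - g x :=
    intervalIntegral.integral_eq_sub_of_hasDerivAt
      (fun t ht => hderiv t (hsub (uIcc_of_le hxy ▸ ht))) (hcont'.intervalIntegrable_of_Icc hxy)
  have hcs := sq_intervalIntegral_le_mul_intervalIntegral_sq hxy hcont'
  have hgrowth : ∫ t in x..y, γ * g' t ^ 2 ≤ g' y - g' x := by
    refine (hmono.mono hsub).intervalIntegral_le_sub_of_ae_le_deriv hxy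
      ((continuousOn_const.mul (hcont'.pow 2)).intervalIntegrable_of_Icc hxy) ?_
    filter_upwards [hderiv2, hineq] with t hd hle ht
    have htS := hsub (Ioo_subset_Icc_self ht)
    rw [(hd htS).deriv]
    exact hle htS
  rw [intervalIntegral.integral_const_mul] at hgrowth
  calc γ * (g y - g x) ^ 2 ≤ γ * ((y - x) * ∫ t in x..y, g' t ^ 2) := by
        rw [← hftc]; gcongr
    _ = (γ * ∫ t in x..y, g' t ^ 2) * (y - x) := by ring
    _ ≤ (g' y - g' x) * (y - x) := by gcongr

theorem ConvexOn.add_mul_sub_le_of_hasDerivAt {S : Set ℝ} {f : ℝ → ℝ} {f' x y : ℝ}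
    (hf : ConvexOn ℝ S f) (hx : x ∈ S) (hy : y ∈ S) (hderiv : HasDerivAt f f' y) :
    f y + f' * (x - y) ≤ f x := by
  rcases lt_trichotomy x y with hxy | rfl | hyx
  · have := hf.slope_le_of_hasDerivAt hx hy hxy hderiv
    rw [slope_def_field, div_le_iff₀ (sub_pos.2 hxy)] at this
    linarith
  · simp
  · have := hf.le_slope_of_hasDerivAt hy hx hyx hderiv
    rw [slope_def_field, le_div_iff₀ (sub_pos.2 hyx)] at this
    linarith

theorem neg_mul_add_mul_le_of_le_abs {γ a b Δ D T : ℝ} (hγ : 0 < γ) (ha : 0 < a) (hab : a ≤ b)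
    (hD : γ * Δ ^ 2 ≤ D) (hT : T ≤ |Δ|) :
    -(a ^ 2 * D) + (b ^ 2 - a ^ 2) * T ≤
      -(γ / 2) * a ^ 2 * Δ ^ 2 + (2 / γ) * (b ^ 2 / a ^ 2) * (b - a) ^ 2 := by
  have hγa : 0 < γ * a ^ 2 := by positivity
  have hcoef : b ^ 2 - a ^ 2 ≤ 2 * b * (b - a) := by nlinarith
  have hamgm : γ * a ^ 2 * ((b ^ 2 - a ^ 2) * |Δ|) ≤
      (γ * a ^ 2 * |Δ|) ^ 2 / 2 + 2 * (b * (b - a)) ^ 2 := by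
    nlinarith [sq_nonneg (γ * a ^ 2 * |Δ| - 2 * (b * (b - a))), abs_nonneg Δ,
      mul_le_mul_of_nonneg_left hcoef (mul_nonneg hγa.le (abs_nonneg Δ))]
  have hcross : (b ^ 2 - a ^ 2) * T ≤
      (γ / 2) * a ^ 2 * Δ ^ 2 + (2 / γ) * (b ^ 2 / a ^ 2) * (b - a) ^ 2 := by
    calc (b ^ 2 - a ^ 2) * T ≤ (b ^ 2 - a ^ 2) * |Δ| := by gcongr; nlinarith
      _ ≤ _ := by
        have hrhs : (γ / 2) * a ^ 2 * Δ ^ 2 + (2 / γ) * (b ^ 2 / a ^ 2) * (b - a) ^ 2 =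
            ((γ * a ^ 2 * |Δ|) ^ 2 / 2 + 2 * (b * (b - a)) ^ 2) / (γ * a ^ 2) := by
          field_simp
          rw [sq_abs]
        rw [hrhs, le_div_iff₀ hγa]
        linarith
  nlinarith [mul_le_mul_of_nonneg_left hD (sq_nonneg a)]

theorem stmt1_general (g g' g'' : ℝ → ℝ) (γ : ℝ) (hγ : γ ∈ Set.Ioc (0:ℝ) 1)
    (hconv : ConvexOn ℝ (Set.Ioi (0:ℝ)) g)
    (hderiv : ∀ r ∈ Set.Ioi (0:ℝ), HasDerivAt g (g' r) r)
    (hcont : ContinuousOn g' (Set.Ioi (0:ℝ)))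
    (hderiv2 : ∀ᵐ r ∂volume, r ∈ Set.Ioi (0:ℝ) → HasDerivAt g' (g'' r) r)
    (hineq : ∀ᵐ r ∂volume, r ∈ Set.Ioi (0:ℝ) → γ * (g' r)^2 ≤ g'' r) :
    ∀ x y a b : ℝ, 0 < x → 0 < y → 0 < a → 0 < b →
      -(b^2 * g' y - a^2 * g' x) * (y - x) ≤
        -(γ/2) * min (a^2) (b^2) * (g y - g x)^2
          + (2/γ) * max (a^2/b^2) (b^2/a^2) * (b - a)^2 := by
  have hmono : MonotoneOn g' (Ioi 0) :=
    (hconv.monotoneOn_deriv fun r hr => (hderiv r hr).differentiableAt).congr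
      fun r hr => (hderiv r hr).deriv
  intro x y a b hx hy ha hb
  wlog hab : a ≤ b generalizing x y a b
  · have := this y x b a hy hx hb ha (le_of_not_ge hab)
    rw [min_comm, max_comm]
    linarith [show (g x - g y) ^ 2 = (g y - g x) ^ 2 by ring,
      show (a - b) ^ 2 = (b - a) ^ 2 by ring]
  have hkey := mul_sq_sub_le_of_ae_mul_sq_le_deriv2 hγ.1.le hmono hderiv hcont hderiv2 hineq hx hy
  have htangent : -(g' y * (y - x)) ≤ |g y - g x| := by
    have := hconv.add_mul_sub_le_of_hasDerivAt hx hy (hderiv y hy)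
    linarith [neg_abs_le (g y - g x)]
  rw [min_eq_left (pow_le_pow_left₀ ha.le hab 2)]
  calc -(b ^ 2 * g' y - a ^ 2 * g' x) * (y - x)
        = -(a ^ 2 * ((g' y - g' x) * (y - x))) + (b ^ 2 - a ^ 2) * -(g' y * (y - x)) := by ring
    _ ≤ -(γ / 2) * a ^ 2 * (g y - g x) ^ 2 + (2 / γ) * (b ^ 2 / a ^ 2) * (b - a) ^ 2 :=
        neg_mul_add_mul_le_of_le_abs hγ.1 ha hab hkey htangent
    _ ≤ _ := by have := hγ.1; gcongr; exact le_max_right _ _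

/-- Lemma A.1, nondegenerate case `a, b > 0`. -/
theorem stmt1 (g g' g'' : ℝ → ℝ) (γ : ℝ) (hγ : γ ∈ Set.Ioc (0:ℝ) 1)
    (hconv : ConvexOn ℝ (Set.Ioi (0:ℝ)) g)
    (hanti : AntitoneOn g (Set.Ioi (0:ℝ)))
    (hderiv : ∀ r ∈ Set.Ioi (0:ℝ), HasDerivAt g (g' r) r)
    (hcont : ContinuousOn g' (Set.Ioi (0:ℝ)))
    (hderiv2 : ∀ᵐ r ∂volume, r ∈ Set.Ioi (0:ℝ) → HasDerivAt g' (g'' r) r)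
    (hineq : ∀ᵐ r ∂volume, r ∈ Set.Ioi (0:ℝ) → γ * (g' r)^2 ≤ g'' r) :
    ∀ x y a b : ℝ, 0 < x → 0 < y → 0 < a → 0 < b →
      -(b^2 * g' y - a^2 * g' x) * (y - x) ≤
        -(γ/2) * min (a^2) (b^2) * (g y - g x)^2
          + (2/γ) * max (a^2/b^2) (b^2/a^2) * (b - a)^2 :=
  stmt1_general g g' g'' γ hγ hconv hderiv hcont hderiv2 hineq
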